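/- arXiv:1206.5822 — 2 statements merged into one kernel-verified Lean document; each statement's English description precedes it below -/
import Mathlib

section
/- Let 0 < θ ≤ π/4, let a, b ∈ M_3(ℂ) be positive semidefinite with ⟨ψ_i, (a⊗b) ψ_i⟩ ≠ 0 for each of the nine states ψ_i of S_3(θ), let δ be the disturbance of a⊗b on S_3(θ), and suppose a_{11} ≥ (1/s)·‖a‖_∞ for some s > 0. Then for j ∈ {0,2}: |b_{j1}| ≤ √2·s·δ·‖b‖_∞ and |b_{11} − b_{jj}| ≤ 2(1+√2·s)·(δ/sin 2θ)·‖b‖_∞. The same statement holds with the roles of a and b exchanged. -/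
open Matrix Kronecker
open scoped ComplexOrder

/-- The disturbance `δ` of the product operator `a ⊗ b` on the family of states `ψ`. -/
noncomputable def disturbance {n dA dB : ℕ} (ψ : Fin n → Fin dA × Fin dB → ℂ)
    (a : Matrix (Fin dA) (Fin dA) ℂ) (b : Matrix (Fin dB) (Fin dB) ℂ) : ℝ :=
  ⨆ p : {q : Fin n × Fin n // q.1 ≠ q.2},
    ‖star (ψ p.1.1) ⬝ᵥ (a ⊗ₖ b).mulVec (ψ p.1.2)‖ /
      Real.sqrt ((star (ψ p.1.1) ⬝ᵥ (a ⊗ₖ b).mulVec (ψ p.1.1)).re *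
        (star (ψ p.1.2) ⬝ᵥ (a ⊗ₖ b).mulVec (ψ p.1.2)).re)

/-- The standard basis vector `|i⟩` of `ℂ³`. -/
noncomputable def e3 (i : Fin 3) : Fin 3 → ℂ := fun k => if k = i then 1 else 0

/-- The product vector `α ⊗ β` in `ℂ³ ⊗ ℂ³`. -/
noncomputable def kp (α β : Fin 3 → ℂ) : Fin 3 × Fin 3 → ℂ := fun p => α p.1 * β p.2

/-- The nine rotated domino states `S₃(θ₁,θ₂,θ₃,θ₄)` in `ℂ³ ⊗ ℂ³`. -/
noncomputable def rotDomino (t1 t2 t3 t4 : ℝ) : Fin 9 → Fin 3 × Fin 3 → ℂ :=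
  ![kp (e3 1) (e3 1),
    kp (e3 0) (fun k => (Real.cos t1 : ℂ) * e3 0 k + (Real.sin t1 : ℂ) * e3 1 k),
    kp (e3 0) (fun k => -(Real.sin t1 : ℂ) * e3 0 k + (Real.cos t1 : ℂ) * e3 1 k),
    kp (e3 2) (fun k => (Real.cos t2 : ℂ) * e3 1 k + (Real.sin t2 : ℂ) * e3 2 k),
    kp (e3 2) (fun k => -(Real.sin t2 : ℂ) * e3 1 k + (Real.cos t2 : ℂ) * e3 2 k),
    kp (fun k => (Real.cos t3 : ℂ) * e3 1 k + (Real.sin t3 : ℂ) * e3 2 k) (e3 0),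
    kp (fun k => -(Real.sin t3 : ℂ) * e3 1 k + (Real.cos t3 : ℂ) * e3 2 k) (e3 0),
    kp (fun k => (Real.cos t4 : ℂ) * e3 0 k + (Real.sin t4 : ℂ) * e3 1 k) (e3 2),
    kp (fun k => -(Real.sin t4 : ℂ) * e3 0 k + (Real.cos t4 : ℂ) * e3 1 k) (e3 2)]

/-- The operator (spectral) norm of a square complex matrix. -/
noncomputable def opNorm {n : ℕ} (M : Matrix (Fin n) (Fin n) ℂ) : ℝ :=
  ‖Matrix.toEuclideanCLM (𝕜 := ℂ) M‖

/- ### Auxiliary lemmas -/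

lemma kp_dot (a b : Matrix (Fin 3) (Fin 3) ℂ) (α β α' β' : Fin 3 → ℂ) :
    star (kp α β) ⬝ᵥ (a ⊗ₖ b).mulVec (kp α' β') =
    (star α ⬝ᵥ a.mulVec α') * (star β ⬝ᵥ b.mulVec β') := by
  simp [dotProduct, mulVec, Matrix.kroneckerMap_apply, kp, Fintype.sum_prod_type,
    Fin.sum_univ_three]
  ring

lemma quad_le_opNorm {n : ℕ} (a : Matrix (Fin n) (Fin n) ℂ) (α : Fin n → ℂ)
    (hα : star α ⬝ᵥ α = 1) : (star α ⬝ᵥ a.mulVec α).re ≤ opNorm a := by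
  set x : EuclideanSpace ℂ (Fin n) := (WithLp.equiv 2 _).symm α with hx
  have h1 : star α ⬝ᵥ a.mulVec α = inner ℂ x (Matrix.toEuclideanCLM (𝕜 := ℂ) a x) := by
    rw [hx, EuclideanSpace.inner_eq_star_dotProduct, dotProduct_comm]; rfl
  have hxn : ‖x‖ = 1 := by
    have h0 : (inner ℂ x x : ℂ) = 1 := by
      rw [hx, EuclideanSpace.inner_eq_star_dotProduct, dotProduct_comm]; exact hα
    have h2 : ‖x‖^2 = 1 := by
      rw [← inner_self_eq_norm_sq (𝕜 := ℂ), h0]; simp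
    nlinarith [norm_nonneg x]
  calc (star α ⬝ᵥ a.mulVec α).re ≤ ‖star α ⬝ᵥ a.mulVec α‖ := Complex.re_le_norm _
    _ = ‖inner ℂ x (Matrix.toEuclideanCLM (𝕜 := ℂ) a x)‖ := by rw [h1]
    _ ≤ ‖x‖ * ‖Matrix.toEuclideanCLM (𝕜 := ℂ) a x‖ := norm_inner_le_norm _ _
    _ ≤ ‖x‖ * (opNorm a * ‖x‖) := by
        gcongr; exact (Matrix.toEuclideanCLM (𝕜 := ℂ) a).le_opNorm x
    _ = opNorm a := by rw [hxn]; ring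

lemma disturbance_nonneg {n dA dB : ℕ} (ψ : Fin n → Fin dA × Fin dB → ℂ)
    (a : Matrix (Fin dA) (Fin dA) ℂ) (b : Matrix (Fin dB) (Fin dB) ℂ) :
    0 ≤ disturbance ψ a b :=
  Real.iSup_nonneg fun _ => div_nonneg (norm_nonneg _) (Real.sqrt_nonneg _)

lemma disturbance_key {n dA dB : ℕ} (ψ : Fin n → Fin dA × Fin dB → ℂ)
    (a : Matrix (Fin dA) (Fin dA) ℂ) (b : Matrix (Fin dB) (Fin dB) ℂ)
    (i j : Fin n) (hij : i ≠ j)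
    (hdi : 0 < (star (ψ i) ⬝ᵥ (a ⊗ₖ b).mulVec (ψ i)).re)
    (hdj : 0 < (star (ψ j) ⬝ᵥ (a ⊗ₖ b).mulVec (ψ j)).re) :
    ‖star (ψ i) ⬝ᵥ (a ⊗ₖ b).mulVec (ψ j)‖ ≤ disturbance ψ a b *
      Real.sqrt ((star (ψ i) ⬝ᵥ (a ⊗ₖ b).mulVec (ψ i)).re *
        (star (ψ j) ⬝ᵥ (a ⊗ₖ b).mulVec (ψ j)).re) := by
  have h := le_ciSup (f := fun p : {q : Fin n × Fin n // q.1 ≠ q.2} =>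
    ‖star (ψ p.1.1) ⬝ᵥ (a ⊗ₖ b).mulVec (ψ p.1.2)‖ /
      Real.sqrt ((star (ψ p.1.1) ⬝ᵥ (a ⊗ₖ b).mulVec (ψ p.1.1)).re *
        (star (ψ p.1.2) ⬝ᵥ (a ⊗ₖ b).mulVec (ψ p.1.2)).re))
    (Set.Finite.bddAbove (Set.finite_range _)) ⟨(i, j), hij⟩
  simp only at h
  rw [div_le_iff₀ (Real.sqrt_pos.mpr (mul_pos hdi hdj))] at h
  exact h

lemma sqrt_le_of_le {d1 d2 P : ℝ} (h1 : 0 ≤ d1) (h1' : d1 ≤ P) (h2 : 0 ≤ d2)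
    (h2' : d2 ≤ P) : Real.sqrt (d1 * d2) ≤ P := by
  have hP : 0 ≤ P := le_trans h1 h1'
  rw [show P = Real.sqrt (P^2) by rw [Real.sqrt_sq hP]]
  exact Real.sqrt_le_sqrt (by nlinarith)

lemma prod_quad_pos (a b : Matrix (Fin 3) (Fin 3) ℂ) (ha : a.PosSemidef)
    (hb : b.PosSemidef) (α β : Fin 3 → ℂ) (v : Fin 3 × Fin 3 → ℂ) (hv : v = kp α β)
    (h : star v ⬝ᵥ (a ⊗ₖ b).mulVec v ≠ 0) :
    (0 < (star α ⬝ᵥ a.mulVec α).re ∧ 0 < (star β ⬝ᵥ b.mulVec β).re) ∧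
    (star v ⬝ᵥ (a ⊗ₖ b).mulVec v).re =
      (star α ⬝ᵥ a.mulVec α).re * (star β ⬝ᵥ b.mulVec β).re := by
  subst hv
  have ima : (star α ⬝ᵥ a.mulVec α).im = 0 := by
    have := ha.dotProduct_mulVec_nonneg α; rw [Complex.le_def] at this; simpa using this.2.symm
  have imb : (star β ⬝ᵥ b.mulVec β).im = 0 := by
    have := hb.dotProduct_mulVec_nonneg β; rw [Complex.le_def] at this; simpa using this.2.symm
  have heq : star (kp α β) ⬝ᵥ (a ⊗ₖ b).mulVec (kp α β) =
      (((star α ⬝ᵥ a.mulVec α).re * (star β ⬝ᵥ b.mulVec β).re : ℝ) : ℂ) := by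
    rw [kp_dot]
    apply Complex.ext <;>
      simp only [Complex.mul_re, Complex.mul_im, ima, imb, Complex.ofReal_re,
        Complex.ofReal_im, mul_zero, zero_mul, add_zero, zero_add, sub_zero]
  have hre : (star (kp α β) ⬝ᵥ (a ⊗ₖ b).mulVec (kp α β)).re =
      (star α ⬝ᵥ a.mulVec α).re * (star β ⬝ᵥ b.mulVec β).re := by
    rw [heq]; simp
  have hne : (star α ⬝ᵥ a.mulVec α).re * (star β ⬝ᵥ b.mulVec β).re ≠ 0 := by
    intro h0
    rw [heq, h0] at h
    simp at h
  refine ⟨⟨?_, ?_⟩, hre⟩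
  · exact lt_of_le_of_ne (ha.re_dotProduct_nonneg α) (Ne.symm (left_ne_zero_of_mul hne))
  · exact lt_of_le_of_ne (hb.re_dotProduct_nonneg β) (Ne.symm (right_ne_zero_of_mul hne))

lemma alg1 (sA δ n1 n2 A c1 c2 : ℝ) (z X Y : ℂ)
    (hApos : 0 < A) (hA : (1/sA) * n1 ≤ A) (hsA : 0 < sA)
    (hn2 : 0 ≤ n2) (hδ : 0 ≤ δ)
    (hX : ‖X‖ ≤ δ * (n1 * n2)) (hY : ‖Y‖ ≤ δ * (n1 * n2))
    (hc : |c1| + |c2| ≤ Real.sqrt 2)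
    (heq : (A:ℂ) * z = (c1:ℂ) * X + (c2:ℂ) * Y) :
    ‖z‖ ≤ Real.sqrt 2 * sA * δ * n2 := by
  have h4 : n1 ≤ A * sA := by
    have h := mul_le_mul_of_nonneg_right hA hsA.le
    have hinv : (1/sA) * n1 * sA = n1 := by field_simp
    linarith [h, hinv.symm.le, hinv.le]
  have hn1n2 : 0 ≤ δ * (n1 * n2) := le_trans (norm_nonneg X) hX
  have h3 : A * ‖z‖ ≤ Real.sqrt 2 * (δ * (n1 * n2)) := by
    have hnz' : A * ‖z‖ = ‖(A:ℂ) * z‖ := by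
      rw [norm_mul, Complex.norm_real, Real.norm_eq_abs, abs_of_pos hApos]
    calc A * ‖z‖ = ‖(c1:ℂ) * X + (c2:ℂ) * Y‖ := by rw [hnz', heq]
      _ ≤ |c1| * ‖X‖ + |c2| * ‖Y‖ := by
          refine (norm_add_le _ _).trans ?_
          simp [norm_mul, Complex.norm_real]
      _ ≤ |c1| * (δ * (n1 * n2)) + |c2| * (δ * (n1 * n2)) := by
          gcongr
      _ = (|c1| + |c2|) * (δ * (n1 * n2)) := by ring
      _ ≤ Real.sqrt 2 * (δ * (n1 * n2)) := mul_le_mul_of_nonneg_right hc hn1n2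
  have h5 : A * ‖z‖ ≤ A * (Real.sqrt 2 * sA * δ * n2) := by
    refine h3.trans ?_
    nlinarith [mul_le_mul_of_nonneg_right h4
      (show 0 ≤ Real.sqrt 2 * (δ * n2) by positivity)]
  exact le_of_mul_le_mul_left h5 hApos

lemma alg2 (sA δ n2 A co si : ℝ) (z w1 w2 X : ℂ)
    (hApos : 0 < A) (hco : 0 < co) (hsi : 0 < si) (hsA : 0 ≤ sA)
    (hδ : 0 ≤ δ) (hn2 : 0 ≤ n2) (hpyth : co^2 + si^2 = 1)
    (hX : ‖X‖ ≤ δ * (A * n2))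
    (hw1 : ‖w1‖ ≤ Real.sqrt 2 * sA * δ * n2) (hw2 : ‖w2‖ ≤ Real.sqrt 2 * sA * δ * n2)
    (heq : X = (A:ℂ) * ((si:ℂ) * (co:ℂ) * z + (co:ℂ)^2 * w1 - (si:ℂ)^2 * w2)) :
    ‖z‖ ≤ 2 * (1 + Real.sqrt 2 * sA) * (δ / (2 * si * co)) * n2 := by
  have h1 : (A:ℂ) * ((si:ℂ) * (co:ℂ) * z) =
      X - (A:ℂ) * ((co:ℂ)^2 * w1 - (si:ℂ)^2 * w2) := by rw [heq]; ring
  have h2 : A * (si * co * ‖z‖) = ‖(A:ℂ) * ((si:ℂ) * (co:ℂ) * z)‖ := by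
    rw [norm_mul, norm_mul, norm_mul, Complex.norm_real, Complex.norm_real,
      Complex.norm_real, Real.norm_eq_abs, Real.norm_eq_abs, Real.norm_eq_abs,
      abs_of_pos hApos, abs_of_pos hco, abs_of_pos hsi]
  have hsub : ‖(co:ℂ)^2 * w1 - (si:ℂ)^2 * w2‖ ≤ co^2 * ‖w1‖ + si^2 * ‖w2‖ := by
    refine (norm_sub_le _ _).trans ?_
    rw [norm_mul, norm_mul, norm_pow, norm_pow, Complex.norm_real,
      Complex.norm_real, Real.norm_eq_abs, Real.norm_eq_abs,
      abs_of_pos hco, abs_of_pos hsi]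
  have h3 : ‖(A:ℂ) * ((co:ℂ)^2 * w1 - (si:ℂ)^2 * w2)‖ ≤
      A * co^2 * ‖w1‖ + A * si^2 * ‖w2‖ := by
    rw [norm_mul, Complex.norm_real, Real.norm_eq_abs, abs_of_pos hApos]
    nlinarith [mul_le_mul_of_nonneg_left hsub hApos.le]
  have h4 : A * (si * co * ‖z‖) ≤ ‖X‖ + (A * co^2 * ‖w1‖ + A * si^2 * ‖w2‖) := by
    rw [h2, h1]
    exact (norm_sub_le _ _).trans (by linarith [h3])
  have e1 := mul_le_mul_of_nonneg_left hw1 (show (0:ℝ) ≤ A * co^2 by positivity)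
  have e2 := mul_le_mul_of_nonneg_left hw2 (show (0:ℝ) ≤ A * si^2 by positivity)
  have e3 : A * co^2 * (Real.sqrt 2 * sA * δ * n2) + A * si^2 * (Real.sqrt 2 * sA * δ * n2)
      = A * (Real.sqrt 2 * sA * δ * n2) := by
    linear_combination (A * (Real.sqrt 2 * sA * δ * n2)) * hpyth
  have key2 : si * co * ‖z‖ ≤ (1 + Real.sqrt 2 * sA) * (δ * n2) := by
    have h5 : A * (si * co * ‖z‖) ≤ A * ((1 + Real.sqrt 2 * sA) * (δ * n2)) := by
      nlinarith [h4, hX, e1, e2, e3]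
    exact le_of_mul_le_mul_left h5 hApos
  have hrw : 2 * (1 + Real.sqrt 2 * sA) * (δ / (2 * si * co)) * n2 =
      (1 + Real.sqrt 2 * sA) * (δ * n2) / (si * co) := by
    field_simp
  rw [hrw, le_div_iff₀ (by positivity)]
  nlinarith [key2]

/- ### Factor vectors of the rotated domino states -/

noncomputable def rvp (t : ℝ) (i j : Fin 3) : Fin 3 → ℂ :=
  fun k => (Real.cos t : ℂ) * e3 i k + (Real.sin t : ℂ) * e3 j k

noncomputable def rvm (t : ℝ) (i j : Fin 3) : Fin 3 → ℂ :=
  fun k => -(Real.sin t : ℂ) * e3 i k + (Real.cos t : ℂ) * e3 j k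

lemma rd0 (t : ℝ) : rotDomino t t t t 0 = kp (e3 1) (e3 1) := rfl
lemma rd1 (t : ℝ) : rotDomino t t t t 1 = kp (e3 0) (rvp t 0 1) := rfl
lemma rd2 (t : ℝ) : rotDomino t t t t 2 = kp (e3 0) (rvm t 0 1) := rfl
lemma rd3 (t : ℝ) : rotDomino t t t t 3 = kp (e3 2) (rvp t 1 2) := rfl
lemma rd4 (t : ℝ) : rotDomino t t t t 4 = kp (e3 2) (rvm t 1 2) := rfl
lemma rd5 (t : ℝ) : rotDomino t t t t 5 = kp (rvp t 1 2) (e3 0) := rfl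
lemma rd6 (t : ℝ) : rotDomino t t t t 6 = kp (rvm t 1 2) (e3 0) := rfl
lemma rd7 (t : ℝ) : rotDomino t t t t 7 = kp (rvp t 0 1) (e3 2) := rfl
lemma rd8 (t : ℝ) : rotDomino t t t t 8 = kp (rvm t 0 1) (e3 2) := rfl

lemma e3_unit (i : Fin 3) : star (e3 i) ⬝ᵥ e3 i = 1 := by
  fin_cases i <;> simp [e3, dotProduct, Fin.sum_univ_three]

lemma rvp_unit (t : ℝ) (i j : Fin 3) (hij : i ≠ j) :
    star (rvp t i j) ⬝ᵥ rvp t i j = 1 := by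
  have h : (Real.cos t : ℂ)^2 + (Real.sin t : ℂ)^2 = 1 := by
    norm_cast; exact Real.cos_sq_add_sin_sq t
  fin_cases i <;> fin_cases j <;>
    first
      | exact absurd rfl hij
      | (simp [rvp, e3, dotProduct, Fin.sum_univ_three, Complex.conj_ofReal,
          -Complex.ofReal_cos, -Complex.ofReal_sin]; linear_combination h)

lemma rvm_unit (t : ℝ) (i j : Fin 3) (hij : i ≠ j) :
    star (rvm t i j) ⬝ᵥ rvm t i j = 1 := by
  have h : (Real.cos t : ℂ)^2 + (Real.sin t : ℂ)^2 = 1 := by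
    norm_cast; exact Real.cos_sq_add_sin_sq t
  fin_cases i <;> fin_cases j <;>
    first
      | exact absurd rfl hij
      | (simp [rvm, e3, dotProduct, Fin.sum_univ_three, Complex.conj_ofReal,
          -Complex.ofReal_cos, -Complex.ofReal_sin]; linear_combination h)

lemma qe (a : Matrix (Fin 3) (Fin 3) ℂ) (i j : Fin 3) :
    star (e3 i) ⬝ᵥ a.mulVec (e3 j) = a i j := by
  fin_cases i <;> fin_cases j <;>
    simp [e3, dotProduct, mulVec, Fin.sum_univ_three]

lemma FP (t : ℝ) (a : Matrix (Fin 3) (Fin 3) ℂ) (i j l : Fin 3) :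
    star (rvp t i j) ⬝ᵥ a.mulVec (e3 l) =
      (Real.cos t : ℂ) * a i l + (Real.sin t : ℂ) * a j l := by
  fin_cases i <;> fin_cases j <;> fin_cases l <;>
    (simp [rvp, e3, dotProduct, mulVec, Fin.sum_univ_three, Complex.conj_ofReal,
      -Complex.ofReal_cos, -Complex.ofReal_sin]; try ring)

lemma FM (t : ℝ) (a : Matrix (Fin 3) (Fin 3) ℂ) (i j l : Fin 3) :
    star (rvm t i j) ⬝ᵥ a.mulVec (e3 l) =
      -(Real.sin t : ℂ) * a i l + (Real.cos t : ℂ) * a j l := by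
  fin_cases i <;> fin_cases j <;> fin_cases l <;>
    (simp [rvm, e3, dotProduct, mulVec, Fin.sum_univ_three, Complex.conj_ofReal,
      -Complex.ofReal_cos, -Complex.ofReal_sin]; try ring)

lemma GP (t : ℝ) (a : Matrix (Fin 3) (Fin 3) ℂ) (l i j : Fin 3) :
    star (e3 l) ⬝ᵥ a.mulVec (rvp t i j) =
      (Real.cos t : ℂ) * a l i + (Real.sin t : ℂ) * a l j := by
  fin_cases i <;> fin_cases j <;> fin_cases l <;>
    (simp [rvp, e3, dotProduct, mulVec, Fin.sum_univ_three, Complex.conj_ofReal,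
      -Complex.ofReal_cos, -Complex.ofReal_sin]; try ring)

lemma GM (t : ℝ) (a : Matrix (Fin 3) (Fin 3) ℂ) (l i j : Fin 3) :
    star (e3 l) ⬝ᵥ a.mulVec (rvm t i j) =
      -(Real.sin t : ℂ) * a l i + (Real.cos t : ℂ) * a l j := by
  fin_cases i <;> fin_cases j <;> fin_cases l <;>
    (simp [rvm, e3, dotProduct, mulVec, Fin.sum_univ_three, Complex.conj_ofReal,
      -Complex.ofReal_cos, -Complex.ofReal_sin]; try ring)

lemma FPM (t : ℝ) (a : Matrix (Fin 3) (Fin 3) ℂ) (i j : Fin 3) :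
    star (rvp t i j) ⬝ᵥ a.mulVec (rvm t i j) =
      -((Real.sin t : ℂ) * (Real.cos t : ℂ)) * a i i + (Real.cos t : ℂ)^2 * a i j
        - (Real.sin t : ℂ)^2 * a j i + (Real.sin t : ℂ) * (Real.cos t : ℂ) * a j j := by
  fin_cases i <;> fin_cases j <;>
    (simp [rvp, rvm, e3, dotProduct, mulVec, Fin.sum_univ_three, Complex.conj_ofReal,
      -Complex.ofReal_cos, -Complex.ofReal_sin]; try ring)

lemma herm_diag {M : Matrix (Fin 3) (Fin 3) ℂ} (hM : M.IsHermitian) (i : Fin 3) :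
    M i i = ((M i i).re : ℂ) := by
  have h := congrFun (congrFun hM i) i
  rw [conjTranspose_apply] at h
  exact (Complex.conj_eq_iff_re.mp (by simpa using h)).symm

lemma herm_off {M : Matrix (Fin 3) (Fin 3) ℂ} (hM : M.IsHermitian) (i j : Fin 3) :
    M i j = (starRingEnd ℂ) (M j i) := by
  have h := congrFun (congrFun hM i) j
  rw [conjTranspose_apply] at h
  simpa using h.symm

/-- For the rotated domino states `S₃(θ)` and any `s > 0`: if
`a₁₁ ≥ (1/s)·‖a‖_∞`, then for `j ∈ {0,2}` one has `|b_{j1}| ≤ √2·s·δ·‖b‖_∞` and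
`|b₁₁ − b_jj| ≤ 2(1+√2·s)·(δ/sin 2θ)·‖b‖_∞`; and the same with the roles of `a` and `b`
exchanged. -/
theorem stmt12
    (th : ℝ) (hth : 0 < th ∧ th ≤ Real.pi / 4)
    (a b : Matrix (Fin 3) (Fin 3) ℂ) (ha : a.PosSemidef) (hb : b.PosSemidef)
    (hnz : ∀ i, star (rotDomino th th th th i) ⬝ᵥ
      (a ⊗ₖ b).mulVec (rotDomino th th th th i) ≠ 0)
    (s : ℝ) (hs : 0 < s) :
    ((a 1 1).re ≥ (1 / s) * opNorm a →
      ∀ j : Fin 3, j = 0 ∨ j = 2 →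
        ‖b j 1‖ ≤ Real.sqrt 2 * s * disturbance (rotDomino th th th th) a b * opNorm b ∧
        ‖b 1 1 - b j j‖ ≤ 2 * (1 + Real.sqrt 2 * s) *
          (disturbance (rotDomino th th th th) a b / Real.sin (2 * th)) * opNorm b) ∧
    ((b 1 1).re ≥ (1 / s) * opNorm b →
      ∀ j : Fin 3, j = 0 ∨ j = 2 →
        ‖a j 1‖ ≤ Real.sqrt 2 * s * disturbance (rotDomino th th th th) a b * opNorm a ∧
        ‖a 1 1 - a j j‖ ≤ 2 * (1 + Real.sqrt 2 * s) *
          (disturbance (rotDomino th th th th) a b / Real.sin (2 * th)) * opNorm a) := by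
  obtain ⟨hth1, hth2⟩ := hth
  have hpi := Real.pi_pos
  have hco : 0 < Real.cos th :=
    Real.cos_pos_of_mem_Ioo ⟨by linarith, by linarith⟩
  have hsi : 0 < Real.sin th := Real.sin_pos_of_pos_of_lt_pi hth1 (by linarith)
  have hpyth : Real.cos th ^ 2 + Real.sin th ^ 2 = 1 := Real.cos_sq_add_sin_sq th
  have hpythC : (Real.cos th : ℂ)^2 + (Real.sin th : ℂ)^2 = 1 := by
    norm_cast
  have hsin2 : Real.sin (2 * th) = 2 * Real.sin th * Real.cos th := by
    rw [Real.sin_two_mul]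
  have hcs : Real.cos th + Real.sin th ≤ Real.sqrt 2 := by
    rw [← Real.sqrt_sq (by positivity : (0:ℝ) ≤ Real.cos th + Real.sin th)]
    exact Real.sqrt_le_sqrt (by nlinarith [sq_nonneg (Real.cos th - Real.sin th)])
  have hD0 : 0 ≤ disturbance (rotDomino th th th th) a b := disturbance_nonneg _ _ _
  have hna0 : (0:ℝ) ≤ opNorm a := norm_nonneg _
  have hnb0 : (0:ℝ) ≤ opNorm b := norm_nonneg _
  -- positivity facts from the nine states
  have P0 := prod_quad_pos a b ha hb _ _ _ (rd0 th) (hnz 0)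
  have P1 := prod_quad_pos a b ha hb _ _ _ (rd1 th) (hnz 1)
  have P2 := prod_quad_pos a b ha hb _ _ _ (rd2 th) (hnz 2)
  have P3 := prod_quad_pos a b ha hb _ _ _ (rd3 th) (hnz 3)
  have P4 := prod_quad_pos a b ha hb _ _ _ (rd4 th) (hnz 4)
  have P5 := prod_quad_pos a b ha hb _ _ _ (rd5 th) (hnz 5)
  have P6 := prod_quad_pos a b ha hb _ _ _ (rd6 th) (hnz 6)
  have P7 := prod_quad_pos a b ha hb _ _ _ (rd7 th) (hnz 7)
  have P8 := prod_quad_pos a b ha hb _ _ _ (rd8 th) (hnz 8)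
  have pa11 : 0 < (a 1 1).re := by have := P0.1.1; rwa [qe] at this
  have pb11 : 0 < (b 1 1).re := by have := P0.1.2; rwa [qe] at this
  have pa00 : 0 < (a 0 0).re := by have := P1.1.1; rwa [qe] at this
  have pa22 : 0 < (a 2 2).re := by have := P3.1.1; rwa [qe] at this
  have pb00 : 0 < (b 0 0).re := by have := P5.1.2; rwa [qe] at this
  have pb22 : 0 < (b 2 2).re := by have := P7.1.2; rwa [qe] at this
  -- positivity of the diagonal quadratic forms
  have d0 := P0.2 ▸ mul_pos P0.1.1 P0.1.2
  have d1 := P1.2 ▸ mul_pos P1.1.1 P1.1.2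
  have d2 := P2.2 ▸ mul_pos P2.1.1 P2.1.2
  have d3 := P3.2 ▸ mul_pos P3.1.1 P3.1.2
  have d4 := P4.2 ▸ mul_pos P4.1.1 P4.1.2
  have d5 := P5.2 ▸ mul_pos P5.1.1 P5.1.2
  have d6 := P6.2 ▸ mul_pos P6.1.1 P6.1.2
  have d7 := P7.2 ▸ mul_pos P7.1.1 P7.1.2
  have d8 := P8.2 ▸ mul_pos P8.1.1 P8.1.2
  -- upper bounds on the diagonal quadratic forms
  have hne01 : (0 : Fin 3) ≠ 1 := by decide
  have hne12 : (1 : Fin 3) ≠ 2 := by decide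
  have l0 : (star (rotDomino th th th th 0) ⬝ᵥ (a ⊗ₖ b).mulVec (rotDomino th th th th 0)).re
      ≤ opNorm a * opNorm b := by
    rw [P0.2]
    exact mul_le_mul (quad_le_opNorm a _ (e3_unit 1)) (quad_le_opNorm b _ (e3_unit 1))
      (hb.re_dotProduct_nonneg _) hna0
  have l1 : (star (rotDomino th th th th 1) ⬝ᵥ (a ⊗ₖ b).mulVec (rotDomino th th th th 1)).re
      ≤ opNorm a * opNorm b := by
    rw [P1.2]
    exact mul_le_mul (quad_le_opNorm a _ (e3_unit 0)) (quad_le_opNorm b _ (rvp_unit th 0 1 hne01))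
      (hb.re_dotProduct_nonneg _) hna0
  have l2 : (star (rotDomino th th th th 2) ⬝ᵥ (a ⊗ₖ b).mulVec (rotDomino th th th th 2)).re
      ≤ opNorm a * opNorm b := by
    rw [P2.2]
    exact mul_le_mul (quad_le_opNorm a _ (e3_unit 0)) (quad_le_opNorm b _ (rvm_unit th 0 1 hne01))
      (hb.re_dotProduct_nonneg _) hna0
  have l3 : (star (rotDomino th th th th 3) ⬝ᵥ (a ⊗ₖ b).mulVec (rotDomino th th th th 3)).re
      ≤ opNorm a * opNorm b := by
    rw [P3.2]
    exact mul_le_mul (quad_le_opNorm a _ (e3_unit 2)) (quad_le_opNorm b _ (rvp_unit th 1 2 hne12))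
      (hb.re_dotProduct_nonneg _) hna0
  have l4 : (star (rotDomino th th th th 4) ⬝ᵥ (a ⊗ₖ b).mulVec (rotDomino th th th th 4)).re
      ≤ opNorm a * opNorm b := by
    rw [P4.2]
    exact mul_le_mul (quad_le_opNorm a _ (e3_unit 2)) (quad_le_opNorm b _ (rvm_unit th 1 2 hne12))
      (hb.re_dotProduct_nonneg _) hna0
  have l5 : (star (rotDomino th th th th 5) ⬝ᵥ (a ⊗ₖ b).mulVec (rotDomino th th th th 5)).re
      ≤ opNorm a * opNorm b := by
    rw [P5.2]
    exact mul_le_mul (quad_le_opNorm a _ (rvp_unit th 1 2 hne12)) (quad_le_opNorm b _ (e3_unit 0))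
      (hb.re_dotProduct_nonneg _) hna0
  have l6 : (star (rotDomino th th th th 6) ⬝ᵥ (a ⊗ₖ b).mulVec (rotDomino th th th th 6)).re
      ≤ opNorm a * opNorm b := by
    rw [P6.2]
    exact mul_le_mul (quad_le_opNorm a _ (rvm_unit th 1 2 hne12)) (quad_le_opNorm b _ (e3_unit 0))
      (hb.re_dotProduct_nonneg _) hna0
  have l7 : (star (rotDomino th th th th 7) ⬝ᵥ (a ⊗ₖ b).mulVec (rotDomino th th th th 7)).re
      ≤ opNorm a * opNorm b := by
    rw [P7.2]
    exact mul_le_mul (quad_le_opNorm a _ (rvp_unit th 0 1 hne01)) (quad_le_opNorm b _ (e3_unit 2))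
      (hb.re_dotProduct_nonneg _) hna0
  have l8 : (star (rotDomino th th th th 8) ⬝ᵥ (a ⊗ₖ b).mulVec (rotDomino th th th th 8)).re
      ≤ opNorm a * opNorm b := by
    rw [P8.2]
    exact mul_le_mul (quad_le_opNorm a _ (rvm_unit th 0 1 hne01)) (quad_le_opNorm b _ (e3_unit 2))
      (hb.re_dotProduct_nonneg _) hna0
  -- crude cross-term bounds
  have c50 := (disturbance_key _ a b 5 0 (by decide) d5 d0).trans
    (mul_le_mul_of_nonneg_left (sqrt_le_of_le d5.le l5 d0.le l0) hD0)
  have c60 := (disturbance_key _ a b 6 0 (by decide) d6 d0).trans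
    (mul_le_mul_of_nonneg_left (sqrt_le_of_le d6.le l6 d0.le l0) hD0)
  have c70 := (disturbance_key _ a b 7 0 (by decide) d7 d0).trans
    (mul_le_mul_of_nonneg_left (sqrt_le_of_le d7.le l7 d0.le l0) hD0)
  have c80 := (disturbance_key _ a b 8 0 (by decide) d8 d0).trans
    (mul_le_mul_of_nonneg_left (sqrt_le_of_le d8.le l8 d0.le l0) hD0)
  have c10 := (disturbance_key _ a b 1 0 (by decide) d1 d0).trans
    (mul_le_mul_of_nonneg_left (sqrt_le_of_le d1.le l1 d0.le l0) hD0)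
  have c20 := (disturbance_key _ a b 2 0 (by decide) d2 d0).trans
    (mul_le_mul_of_nonneg_left (sqrt_le_of_le d2.le l2 d0.le l0) hD0)
  have c30 := (disturbance_key _ a b 3 0 (by decide) d3 d0).trans
    (mul_le_mul_of_nonneg_left (sqrt_le_of_le d3.le l3 d0.le l0) hD0)
  have c40 := (disturbance_key _ a b 4 0 (by decide) d4 d0).trans
    (mul_le_mul_of_nonneg_left (sqrt_le_of_le d4.le l4 d0.le l0) hD0)
  -- sharp cross-term bounds for the "difference" pairs
  have l1' : (star (rotDomino th th th th 1) ⬝ᵥ (a ⊗ₖ b).mulVec (rotDomino th th th th 1)).re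
      ≤ (a 0 0).re * opNorm b := by
    rw [P1.2, qe]
    exact mul_le_mul_of_nonneg_left (quad_le_opNorm b _ (rvp_unit th 0 1 hne01)) pa00.le
  have l2' : (star (rotDomino th th th th 2) ⬝ᵥ (a ⊗ₖ b).mulVec (rotDomino th th th th 2)).re
      ≤ (a 0 0).re * opNorm b := by
    rw [P2.2, qe]
    exact mul_le_mul_of_nonneg_left (quad_le_opNorm b _ (rvm_unit th 0 1 hne01)) pa00.le
  have l3' : (star (rotDomino th th th th 3) ⬝ᵥ (a ⊗ₖ b).mulVec (rotDomino th th th th 3)).re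
      ≤ (a 2 2).re * opNorm b := by
    rw [P3.2, qe]
    exact mul_le_mul_of_nonneg_left (quad_le_opNorm b _ (rvp_unit th 1 2 hne12)) pa22.le
  have l4' : (star (rotDomino th th th th 4) ⬝ᵥ (a ⊗ₖ b).mulVec (rotDomino th th th th 4)).re
      ≤ (a 2 2).re * opNorm b := by
    rw [P4.2, qe]
    exact mul_le_mul_of_nonneg_left (quad_le_opNorm b _ (rvm_unit th 1 2 hne12)) pa22.le
  have l5' : (star (rotDomino th th th th 5) ⬝ᵥ (a ⊗ₖ b).mulVec (rotDomino th th th th 5)).re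
      ≤ (b 0 0).re * opNorm a := by
    rw [P5.2, qe, mul_comm]
    exact mul_le_mul_of_nonneg_left (quad_le_opNorm a _ (rvp_unit th 1 2 hne12)) pb00.le
  have l6' : (star (rotDomino th th th th 6) ⬝ᵥ (a ⊗ₖ b).mulVec (rotDomino th th th th 6)).re
      ≤ (b 0 0).re * opNorm a := by
    rw [P6.2, qe, mul_comm]
    exact mul_le_mul_of_nonneg_left (quad_le_opNorm a _ (rvm_unit th 1 2 hne12)) pb00.le
  have l7' : (star (rotDomino th th th th 7) ⬝ᵥ (a ⊗ₖ b).mulVec (rotDomino th th th th 7)).re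
      ≤ (b 2 2).re * opNorm a := by
    rw [P7.2, qe, mul_comm]
    exact mul_le_mul_of_nonneg_left (quad_le_opNorm a _ (rvp_unit th 0 1 hne01)) pb22.le
  have l8' : (star (rotDomino th th th th 8) ⬝ᵥ (a ⊗ₖ b).mulVec (rotDomino th th th th 8)).re
      ≤ (b 2 2).re * opNorm a := by
    rw [P8.2, qe, mul_comm]
    exact mul_le_mul_of_nonneg_left (quad_le_opNorm a _ (rvm_unit th 0 1 hne01)) pb22.le
  have c12 := (disturbance_key _ a b 1 2 (by decide) d1 d2).trans
    (mul_le_mul_of_nonneg_left (sqrt_le_of_le d1.le l1' d2.le l2') hD0)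
  have c34 := (disturbance_key _ a b 3 4 (by decide) d3 d4).trans
    (mul_le_mul_of_nonneg_left (sqrt_le_of_le d3.le l3' d4.le l4') hD0)
  have c56 := (disturbance_key _ a b 5 6 (by decide) d5 d6).trans
    (mul_le_mul_of_nonneg_left (sqrt_le_of_le d5.le l5' d6.le l6') hD0)
  have c78 := (disturbance_key _ a b 7 8 (by decide) d7 d8).trans
    (mul_le_mul_of_nonneg_left (sqrt_le_of_le d7.le l7' d8.le l8') hD0)
  -- cross-term values
  have hX50 : star (rotDomino th th th th 5) ⬝ᵥ (a ⊗ₖ b).mulVec (rotDomino th th th th 0)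
      = ((Real.cos th : ℂ) * a 1 1 + (Real.sin th : ℂ) * a 2 1) * b 0 1 := by
    rw [rd5, rd0, kp_dot, FP, qe]
  have hX60 : star (rotDomino th th th th 6) ⬝ᵥ (a ⊗ₖ b).mulVec (rotDomino th th th th 0)
      = (-(Real.sin th : ℂ) * a 1 1 + (Real.cos th : ℂ) * a 2 1) * b 0 1 := by
    rw [rd6, rd0, kp_dot, FM, qe]
  have hX70 : star (rotDomino th th th th 7) ⬝ᵥ (a ⊗ₖ b).mulVec (rotDomino th th th th 0)
      = ((Real.cos th : ℂ) * a 0 1 + (Real.sin th : ℂ) * a 1 1) * b 2 1 := by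
    rw [rd7, rd0, kp_dot, FP, qe]
  have hX80 : star (rotDomino th th th th 8) ⬝ᵥ (a ⊗ₖ b).mulVec (rotDomino th th th th 0)
      = (-(Real.sin th : ℂ) * a 0 1 + (Real.cos th : ℂ) * a 1 1) * b 2 1 := by
    rw [rd8, rd0, kp_dot, FM, qe]
  have hX12 : star (rotDomino th th th th 1) ⬝ᵥ (a ⊗ₖ b).mulVec (rotDomino th th th th 2)
      = a 0 0 * (-((Real.sin th : ℂ) * (Real.cos th : ℂ)) * b 0 0
          + (Real.cos th : ℂ)^2 * b 0 1 - (Real.sin th : ℂ)^2 * b 1 0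
          + (Real.sin th : ℂ) * (Real.cos th : ℂ) * b 1 1) := by
    rw [rd1, rd2, kp_dot, qe, FPM]
  have hX34 : star (rotDomino th th th th 3) ⬝ᵥ (a ⊗ₖ b).mulVec (rotDomino th th th th 4)
      = a 2 2 * (-((Real.sin th : ℂ) * (Real.cos th : ℂ)) * b 1 1
          + (Real.cos th : ℂ)^2 * b 1 2 - (Real.sin th : ℂ)^2 * b 2 1
          + (Real.sin th : ℂ) * (Real.cos th : ℂ) * b 2 2) := by
    rw [rd3, rd4, kp_dot, qe, FPM]
  have hX10 : star (rotDomino th th th th 1) ⬝ᵥ (a ⊗ₖ b).mulVec (rotDomino th th th th 0)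
      = a 0 1 * ((Real.cos th : ℂ) * b 0 1 + (Real.sin th : ℂ) * b 1 1) := by
    rw [rd1, rd0, kp_dot, qe, FP]
  have hX20 : star (rotDomino th th th th 2) ⬝ᵥ (a ⊗ₖ b).mulVec (rotDomino th th th th 0)
      = a 0 1 * (-(Real.sin th : ℂ) * b 0 1 + (Real.cos th : ℂ) * b 1 1) := by
    rw [rd2, rd0, kp_dot, qe, FM]
  have hX30 : star (rotDomino th th th th 3) ⬝ᵥ (a ⊗ₖ b).mulVec (rotDomino th th th th 0)
      = a 2 1 * ((Real.cos th : ℂ) * b 1 1 + (Real.sin th : ℂ) * b 2 1) := by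
    rw [rd3, rd0, kp_dot, qe, FP]
  have hX40 : star (rotDomino th th th th 4) ⬝ᵥ (a ⊗ₖ b).mulVec (rotDomino th th th th 0)
      = a 2 1 * (-(Real.sin th : ℂ) * b 1 1 + (Real.cos th : ℂ) * b 2 1) := by
    rw [rd4, rd0, kp_dot, qe, FM]
  have hX78 : star (rotDomino th th th th 7) ⬝ᵥ (a ⊗ₖ b).mulVec (rotDomino th th th th 8)
      = (-((Real.sin th : ℂ) * (Real.cos th : ℂ)) * a 0 0
          + (Real.cos th : ℂ)^2 * a 0 1 - (Real.sin th : ℂ)^2 * a 1 0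
          + (Real.sin th : ℂ) * (Real.cos th : ℂ) * a 1 1) * b 2 2 := by
    rw [rd7, rd8, kp_dot, qe, FPM]
  have hX56 : star (rotDomino th th th th 5) ⬝ᵥ (a ⊗ₖ b).mulVec (rotDomino th th th th 6)
      = (-((Real.sin th : ℂ) * (Real.cos th : ℂ)) * a 1 1
          + (Real.cos th : ℂ)^2 * a 1 2 - (Real.sin th : ℂ)^2 * a 2 1
          + (Real.sin th : ℂ) * (Real.cos th : ℂ) * a 2 2) * b 0 0 := by
    rw [rd5, rd6, kp_dot, qe, FPM]
  constructor
  · -- side A : `a 1 1` is large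
    intro hA11 j hj
    have key01 : ‖b 0 1‖ ≤
        Real.sqrt 2 * s * disturbance (rotDomino th th th th) a b * opNorm b := by
      refine alg1 s _ _ _ _ (Real.cos th) (-(Real.sin th)) _ _ _
        pa11 hA11 hs hnb0 hD0 c50 c60 ?_ ?_
      · rw [abs_neg, abs_of_pos hco, abs_of_pos hsi]; exact hcs
      · rw [hX50, hX60, ← herm_diag ha.1 1, Complex.ofReal_neg]
        linear_combination (-(a 1 1 * b 0 1)) * hpythC
    have key21 : ‖b 2 1‖ ≤
        Real.sqrt 2 * s * disturbance (rotDomino th th th th) a b * opNorm b := by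
      refine alg1 s _ _ _ _ (Real.sin th) (Real.cos th) _ _ _
        pa11 hA11 hs hnb0 hD0 c70 c80 ?_ ?_
      · rw [abs_of_pos hco, abs_of_pos hsi]; linarith
      · rw [hX70, hX80, ← herm_diag ha.1 1]
        linear_combination (-(a 1 1 * b 2 1)) * hpythC
    rcases hj with rfl | rfl
    · refine ⟨key01, ?_⟩
      rw [hsin2]
      refine alg2 s _ _ _ (Real.cos th) (Real.sin th) (b 1 1 - b 0 0) (b 0 1) (b 1 0) _
        pa00 hco hsi hs.le hD0 hnb0 hpyth c12 key01 ?_ ?_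
      · rw [herm_off hb.1 1 0, RCLike.norm_conj]; exact key01
      · rw [hX12, ← herm_diag ha.1 0]; ring
    · refine ⟨key21, ?_⟩
      rw [hsin2, show (b 1 1 - b 2 2 : ℂ) = -(b 2 2 - b 1 1) by ring, norm_neg]
      refine alg2 s _ _ _ (Real.cos th) (Real.sin th) (b 2 2 - b 1 1) (b 1 2) (b 2 1) _
        pa22 hco hsi hs.le hD0 hnb0 hpyth c34 ?_ key21 ?_
      · rw [herm_off hb.1 1 2, RCLike.norm_conj]; exact key21
      · rw [hX34, ← herm_diag ha.1 2]; ring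
  · -- side B : `b 1 1` is large
    intro hB11 j hj
    have key01 : ‖a 0 1‖ ≤
        Real.sqrt 2 * s * disturbance (rotDomino th th th th) a b * opNorm a := by
      refine alg1 s _ _ _ _ (Real.sin th) (Real.cos th) _ _ _
        pb11 hB11 hs hna0 hD0 (c10.trans_eq (by ring)) (c20.trans_eq (by ring)) ?_ ?_
      · rw [abs_of_pos hco, abs_of_pos hsi]; linarith
      · rw [hX10, hX20, ← herm_diag hb.1 1]
        linear_combination (-(a 0 1 * b 1 1)) * hpythC
    have key21 : ‖a 2 1‖ ≤
        Real.sqrt 2 * s * disturbance (rotDomino th th th th) a b * opNorm a := by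
      refine alg1 s _ _ _ _ (Real.cos th) (-(Real.sin th)) _ _ _
        pb11 hB11 hs hna0 hD0 (c30.trans_eq (by ring)) (c40.trans_eq (by ring)) ?_ ?_
      · rw [abs_neg, abs_of_pos hco, abs_of_pos hsi]; exact hcs
      · rw [hX30, hX40, ← herm_diag hb.1 1, Complex.ofReal_neg]
        linear_combination (-(a 2 1 * b 1 1)) * hpythC
    rcases hj with rfl | rfl
    · refine ⟨key01, ?_⟩
      rw [hsin2]
      refine alg2 s _ _ _ (Real.cos th) (Real.sin th) (a 1 1 - a 0 0) (a 0 1) (a 1 0) _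
        pb22 hco hsi hs.le hD0 hna0 hpyth c78 key01 ?_ ?_
      · rw [herm_off ha.1 1 0, RCLike.norm_conj]; exact key01
      · rw [hX78, ← herm_diag hb.1 2]; ring
    · refine ⟨key21, ?_⟩
      rw [hsin2, show (a 1 1 - a 2 2 : ℂ) = -(a 2 2 - a 1 1) by ring, norm_neg]
      refine alg2 s _ _ _ (Real.cos th) (Real.sin th) (a 2 2 - a 1 1) (a 1 2) (a 2 1) _
        pb00 hco hsi hs.le hD0 hna0 hpyth c56 ?_ key21 ?_
      · rw [herm_off ha.1 1 2, RCLike.norm_conj]; exact key21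
      · rw [hX56, ← herm_diag hb.1 0]; ring
end

section
/- Let S = {ψ_1,…,ψ_n} with n ≥ 2 be a set of orthonormal product states in ℂ^{d_A}⊗ℂ^{d_B}, and suppose a real number η satisfies the nonlocality inequality for S. Then η ≤ 2. In other words, the nonlocality constant of S satisfies η ≤ 2. -/
open Matrix Kronecker
open scoped ComplexOrder

/-! ### Auxiliary lemmas -/

lemma aux_conj_dot {d : ℕ} (x y : Fin d → ℂ) :
    (starRingEnd ℂ) (star x ⬝ᵥ y) = star y ⬝ᵥ x := by
  simp only [dotProduct, map_sum, Pi.star_apply, Complex.star_def]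
  refine Finset.sum_congr rfl fun i _ => ?_
  rw [_root_.map_mul, Complex.conj_conj, mul_comm]

lemma aux_conj_mul_self (z : ℂ) : (starRingEnd ℂ) z * z = ((‖z‖ ^ 2 : ℝ) : ℂ) := by
  rw [mul_comm, Complex.mul_conj, Complex.normSq_eq_norm_sq]

lemma aux_dot_self {d : ℕ} (x : Fin d → ℂ) :
    star x ⬝ᵥ x = ((∑ i, ‖x i‖ ^ 2 : ℝ) : ℂ) := by
  rw [Complex.ofReal_sum]
  simp only [dotProduct, Pi.star_apply, Complex.star_def]
  exact Finset.sum_congr rfl fun i _ => aux_conj_mul_self (x i)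

lemma aux_dot_self_coe {d : ℕ} (x : Fin d → ℂ) :
    star x ⬝ᵥ x = (((star x ⬝ᵥ x).re : ℝ) : ℂ) := by
  rw [aux_dot_self, Complex.ofReal_re]

lemma aux_dot_self_nonneg {d : ℕ} (x : Fin d → ℂ) : 0 ≤ (star x ⬝ᵥ x).re := by
  rw [aux_dot_self]
  simp only [Complex.ofReal_re]
  positivity

lemma aux_cs {d : ℕ} (x y : Fin d → ℂ) :
    ‖star x ⬝ᵥ y‖ ^ 2 ≤ (star x ⬝ᵥ x).re * (star y ⬝ᵥ y).re := by
  have hx : inner ℂ ((WithLp.equiv 2 (Fin d → ℂ)).symm x) ((WithLp.equiv 2 (Fin d → ℂ)).symm y) = star x ⬝ᵥ y :=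
    (EuclideanSpace.inner_toLp_toLp x y).trans (dotProduct_comm _ _)
  have hxx : inner ℂ ((WithLp.equiv 2 (Fin d → ℂ)).symm x) ((WithLp.equiv 2 (Fin d → ℂ)).symm x) = star x ⬝ᵥ x :=
    (EuclideanSpace.inner_toLp_toLp x x).trans (dotProduct_comm _ _)
  have hyy : inner ℂ ((WithLp.equiv 2 (Fin d → ℂ)).symm y) ((WithLp.equiv 2 (Fin d → ℂ)).symm y) = star y ⬝ᵥ y :=
    (EuclideanSpace.inner_toLp_toLp y y).trans (dotProduct_comm _ _)
  set x' := (WithLp.equiv 2 (Fin d → ℂ)).symm x with hx'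
  set y' := (WithLp.equiv 2 (Fin d → ℂ)).symm y with hy'
  have h1 : ‖star x ⬝ᵥ y‖ ≤ ‖x'‖ * ‖y'‖ := by
    rw [← hx]; exact norm_inner_le_norm x' y'
  have h2 : (star x ⬝ᵥ x).re = ‖x'‖ ^ 2 := by
    rw [← hxx]
    have := inner_self_eq_norm_sq (𝕜 := ℂ) x'
    simpa [RCLike.re_to_complex] using this
  have h3 : (star y ⬝ᵥ y).re = ‖y'‖ ^ 2 := by
    rw [← hyy]
    have := inner_self_eq_norm_sq (𝕜 := ℂ) y'
    simpa [RCLike.re_to_complex] using this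
  rw [h2, h3]
  calc ‖star x ⬝ᵥ y‖ ^ 2 ≤ (‖x'‖ * ‖y'‖) ^ 2 :=
        pow_le_pow_left₀ (norm_nonneg _) h1 2
    _ = ‖x'‖ ^ 2 * ‖y'‖ ^ 2 := by ring

lemma aux_dot_split {dA dB : ℕ} (x x' : Fin dA → ℂ) (y y' : Fin dB → ℂ) :
    star (fun p : Fin dA × Fin dB => x p.1 * y p.2) ⬝ᵥ (fun p => x' p.1 * y' p.2)
      = (star x ⬝ᵥ x') * (star y ⬝ᵥ y') := by
  simp only [dotProduct, Pi.star_apply]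
  rw [Fintype.sum_mul_sum (fun i => star (x i) * x' i) (fun j => star (y j) * y' j)]
  rw [Fintype.sum_prod_type]
  refine Finset.sum_congr rfl fun i _ => Finset.sum_congr rfl fun j _ => ?_
  simp only [star_mul']
  ring

lemma aux_kron_mulVec {dA dB : ℕ} (x' : Fin dA → ℂ) (y' : Fin dB → ℂ)
    (a : Matrix (Fin dA) (Fin dA) ℂ) (b : Matrix (Fin dB) (Fin dB) ℂ) :
    (a ⊗ₖ b).mulVec (fun p => x' p.1 * y' p.2)
      = fun p => (a.mulVec x') p.1 * (b.mulVec y') p.2 := by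
  funext p
  simp only [Matrix.mulVec, dotProduct, Matrix.kroneckerMap_apply,
    Fintype.sum_prod_type]
  rw [Fintype.sum_mul_sum (fun j => a p.1 j * x' j) (fun l => b p.2 l * y' l)]
  refine Finset.sum_congr rfl fun j _ => Finset.sum_congr rfl fun l _ => ?_
  ring

lemma aux_kron_split {dA dB : ℕ} (x x' : Fin dA → ℂ) (y y' : Fin dB → ℂ)
    (a : Matrix (Fin dA) (Fin dA) ℂ) (b : Matrix (Fin dB) (Fin dB) ℂ) :
    star (fun p : Fin dA × Fin dB => x p.1 * y p.2) ⬝ᵥ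
        (a ⊗ₖ b).mulVec (fun p => x' p.1 * y' p.2)
      = (star x ⬝ᵥ a.mulVec x') * (star y ⬝ᵥ b.mulVec y') := by
  rw [aux_kron_mulVec]
  exact aux_dot_split x (a.mulVec x') y (b.mulVec y')

lemma aux_vmv_dot {d : ℕ} (v x y : Fin d → ℂ) :
    star x ⬝ᵥ (Matrix.vecMulVec v (star v)).mulVec y
      = (star x ⬝ᵥ v) * (star v ⬝ᵥ y) := by
  have h1 : (Matrix.vecMulVec v (star v)).mulVec y = fun i => v i * (star v ⬝ᵥ y) := by
    funext i
    simp only [Matrix.mulVec, dotProduct, Matrix.vecMulVec_apply, Pi.star_apply,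
      Finset.mul_sum]
    exact Finset.sum_congr rfl fun j _ => by ring
  rw [h1]
  simp only [dotProduct, Pi.star_apply, Finset.sum_mul]
  exact Finset.sum_congr rfl fun i _ => by ring

lemma aux_rank_one_dot {d : ℕ} (t : ℝ) (v x y : Fin d → ℂ) :
    star x ⬝ᵥ ((1 : Matrix (Fin d) (Fin d) ℂ)
        + (t : ℂ) • Matrix.vecMulVec v (star v)).mulVec y
      = star x ⬝ᵥ y + (t : ℂ) * ((star x ⬝ᵥ v) * (star v ⬝ᵥ y)) := by
  rw [Matrix.add_mulVec, dotProduct_add, Matrix.one_mulVec,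
    Matrix.smul_mulVec, dotProduct_smul, smul_eq_mul, aux_vmv_dot]

lemma aux_psd {d : ℕ} (t : ℝ) (ht : 0 ≤ t) (v : Fin d → ℂ) :
    ((1 : Matrix (Fin d) (Fin d) ℂ) + (t : ℂ) • Matrix.vecMulVec v (star v)).PosSemidef := by
  refine Matrix.PosSemidef.add Matrix.PosSemidef.one (Matrix.PosSemidef.of_dotProduct_mulVec_nonneg ?_ ?_)
  · ext i j
    simp only [Matrix.conjTranspose_apply, Matrix.smul_apply, Matrix.vecMulVec_apply,
      Pi.star_apply, star_mul', star_star, smul_eq_mul, star_smul]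
    rw [Complex.star_def, Complex.conj_ofReal]
    ring
  · intro x
    have h : star x ⬝ᵥ ((t : ℂ) • Matrix.vecMulVec v (star v)).mulVec x
        = (t : ℂ) * ((star x ⬝ᵥ v) * (star v ⬝ᵥ x)) := by
      rw [Matrix.smul_mulVec, dotProduct_smul, smul_eq_mul, aux_vmv_dot]
    rw [h, ← aux_conj_dot v x, aux_conj_mul_self, ← Complex.ofReal_mul, Complex.zero_le_real]
    positivity

lemma aux_two_cs {a b c d : ℝ} (ha : 0 ≤ a) (hb : 0 ≤ b) (hc : 0 ≤ c) (hd : 0 ≤ d) :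
    Real.sqrt (a * c) + Real.sqrt (b * d) ≤ Real.sqrt ((a + b) * (c + d)) := by
  rw [Real.le_sqrt (by positivity) (by positivity)]
  have h7 : Real.sqrt (a * c) * Real.sqrt (b * d) ≤ (a * d + b * c) / 2 := by
    rw [← Real.sqrt_mul (by positivity)]
    have h6 : a * c * (b * d) = (a * d) * (b * c) := by ring
    rw [h6, Real.sqrt_mul (by positivity)]
    nlinarith [Real.sq_sqrt (mul_nonneg ha hd), Real.sq_sqrt (mul_nonneg hb hc),
      sq_nonneg (Real.sqrt (a * d) - Real.sqrt (b * c)),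
      Real.sqrt_nonneg (a * d), Real.sqrt_nonneg (b * c)]
  nlinarith [Real.sq_sqrt (mul_nonneg ha hc), Real.sq_sqrt (mul_nonneg hb hd),
    Real.sqrt_nonneg (a * c), Real.sqrt_nonneg (b * d), h7]

lemma aux_sqrt_comb {x y u w : ℝ} (hx : 0 ≤ x) (hy : 0 ≤ y) (hu : 0 ≤ u) (hw : 0 ≤ w) :
    Real.sqrt (x * y) * (Real.sqrt u * Real.sqrt w) = Real.sqrt ((x * u) * (y * w)) := by
  rw [Real.sqrt_mul hx y, Real.sqrt_mul (mul_nonneg hx hu), Real.sqrt_mul hx u,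
    Real.sqrt_mul hy w]
  ring

set_option maxHeartbeats 2000000 in
/-- The key quantitative inequality, for every `t ≥ 1`. -/
lemma aux_key {n dA dB : ℕ} (hn : 2 ≤ n)
    (ψ : Fin n → Fin dA × Fin dB → ℂ)
    (α : Fin n → Fin dA → ℂ) (β : Fin n → Fin dB → ℂ)
    (hprod : ∀ i, ψ i = fun p => α i p.1 * β i p.2)
    (hunit : ∀ i, star (ψ i) ⬝ᵥ ψ i = 1)
    (horth : ∀ i j, i ≠ j → star (ψ i) ⬝ᵥ ψ j = 0)
    (η : ℝ) (hη0 : 0 ≤ η)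
    (hη : ∀ (a : Matrix (Fin dA) (Fin dA) ℂ) (b : Matrix (Fin dB) (Fin dB) ℂ),
      a.PosSemidef → b.PosSemidef →
      (∀ i, star (ψ i) ⬝ᵥ (a ⊗ₖ b).mulVec (ψ i) ≠ 0) →
      η * ((⨆ k, (star (ψ k) ⬝ᵥ (a ⊗ₖ b).mulVec (ψ k)).re) /
            (∑ j, (star (ψ j) ⬝ᵥ (a ⊗ₖ b).mulVec (ψ j)).re) -
          1 / (n : ℝ)) ≤
        disturbance ψ a b)
    (t : ℝ) (ht : 1 ≤ t) (i0 : Fin n) :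
    η * (1 - 1 / (n : ℝ)) ≤ 1 + η *
      (((n : ℝ) - 1) *
        (1 + ((star (α i0) ⬝ᵥ α i0).re + (star (β i0) ⬝ᵥ β i0).re)) / t) := by
  classical
  have ht0 : (0 : ℝ) < t := lt_of_lt_of_le one_pos ht
  have hn' : (2 : ℝ) ≤ (n : ℝ) := by exact_mod_cast hn
  set G : Fin n → Fin n → ℂ := fun i j => star (α i) ⬝ᵥ α j with hG
  set H : Fin n → Fin n → ℂ := fun i j => star (β i) ⬝ᵥ β j with hH
  set g : Fin n → ℝ := fun i => (star (α i) ⬝ᵥ α i).re with hg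
  set h : Fin n → ℝ := fun i => (star (β i) ⬝ᵥ β i).re with hh
  set S : Fin n → ℝ := fun i => ‖G i0 i‖ ^ 2 with hS
  set R : Fin n → ℝ := fun i => ‖H i0 i‖ ^ 2 with hR
  set p : Fin n → ℝ := fun i => (g i + t * S i) * (h i + t * R i) with hp
  set c : ℝ := g i0 + h i0 with hc
  set a : Matrix (Fin dA) (Fin dA) ℂ :=
    (1 : Matrix (Fin dA) (Fin dA) ℂ) + (t : ℂ) • Matrix.vecMulVec (α i0) (star (α i0)) with ha
  set b : Matrix (Fin dB) (Fin dB) ℂ :=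
    (1 : Matrix (Fin dB) (Fin dB) ℂ) + (t : ℂ) • Matrix.vecMulVec (β i0) (star (β i0)) with hb
  have hGdef : ∀ i j, G i j = star (α i) ⬝ᵥ α j := fun i j => by rw [hG]
  have hHdef : ∀ i j, H i j = star (β i) ⬝ᵥ β j := fun i j => by rw [hH]
  have hψ : ∀ i j, star (ψ i) ⬝ᵥ ψ j = G i j * H i j := by
    intro i j; rw [hprod i, hprod j, hGdef, hHdef]; exact aux_dot_split _ _ _ _
  have hGcoe : ∀ i, G i i = ((g i : ℝ) : ℂ) := by
    intro i; simp only [hG, hg]; exact aux_dot_self_coe (α i)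
  have hHcoe : ∀ i, H i i = ((h i : ℝ) : ℂ) := by
    intro i; simp only [hH, hh]; exact aux_dot_self_coe (β i)
  have hg0 : ∀ i, 0 ≤ g i := fun i => by simp only [hg]; exact aux_dot_self_nonneg (α i)
  have hh0 : ∀ i, 0 ≤ h i := fun i => by simp only [hh]; exact aux_dot_self_nonneg (β i)
  have hS0 : ∀ i, 0 ≤ S i := fun i => by simp only [hS]; positivity
  have hR0 : ∀ i, 0 ≤ R i := fun i => by simp only [hR]; positivity
  have hgh : ∀ i, g i * h i = 1 := by
    intro i
    have h1 := hunit i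
    rw [hψ i i, hGcoe i, hHcoe i, ← Complex.ofReal_mul] at h1
    exact_mod_cast h1
  have hgpos : ∀ i, 0 < g i := by
    intro i
    rcases lt_or_eq_of_le (hg0 i) with h' | h'
    · exact h'
    · exfalso; have h1 := hgh i; rw [← h'] at h1; simp at h1
  have hhpos : ∀ i, 0 < h i := by
    intro i
    rcases lt_or_eq_of_le (hh0 i) with h' | h'
    · exact h'
    · exfalso; have h1 := hgh i; rw [← h'] at h1; simp at h1
  have hGH : ∀ i j, i ≠ j → G i j * H i j = 0 := by
    intro i j hij
    have h1 := horth i j hij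
    rw [hψ i j] at h1; exact h1
  have hSR : ∀ i, i ≠ i0 → S i * R i = 0 := by
    intro i hi
    have h1 : G i0 i * H i0 i = 0 := hGH i0 i (Ne.symm hi)
    have h2 : ‖G i0 i‖ * ‖H i0 i‖ = 0 := by rw [← norm_mul, h1, norm_zero]
    simp only [hS, hR]
    rcases mul_eq_zero.mp h2 with h' | h'
    · rw [h']; ring
    · rw [h']; ring
  have hS_i0 : S i0 = g i0 ^ 2 := by
    simp only [hS]; rw [hGcoe i0]
    rw [Complex.norm_real, Real.norm_eq_abs, abs_of_nonneg (hg0 i0)]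
  have hR_i0 : R i0 = h i0 ^ 2 := by
    simp only [hR]; rw [hHcoe i0]
    rw [Complex.norm_real, Real.norm_eq_abs, abs_of_nonneg (hh0 i0)]
  have hCS_S : ∀ i, S i ≤ g i0 * g i := by
    intro i; simp only [hS, hg, hG]; exact aux_cs (α i0) (α i)
  have hCS_R : ∀ i, R i ≤ h i0 * h i := by
    intro i; simp only [hR, hh, hH]; exact aux_cs (β i0) (β i)
  have hCS_G : ∀ i j, ‖G i j‖ ^ 2 ≤ g i * g j := by
    intro i j; simp only [hg, hG]; exact aux_cs (α i) (α j)
  have hCS_H : ∀ i j, ‖H i j‖ ^ 2 ≤ h i * h j := by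
    intro i j; simp only [hh, hH]; exact aux_cs (β i) (β j)
  have hA : ∀ i j, star (ψ i) ⬝ᵥ (a ⊗ₖ b).mulVec (ψ j) =
      (G i j + (t : ℂ) * ((starRingEnd ℂ) (G i0 i) * G i0 j)) *
      (H i j + (t : ℂ) * ((starRingEnd ℂ) (H i0 i) * H i0 j)) := by
    intro i j
    rw [hprod i, hprod j, ha, hb, aux_kron_split, aux_rank_one_dot, aux_rank_one_dot]
    simp only [hG, hH, aux_conj_dot]
  have hdiag : ∀ i, star (ψ i) ⬝ᵥ (a ⊗ₖ b).mulVec (ψ i) = ((p i : ℝ) : ℂ) := by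
    intro i
    rw [hA i i, aux_conj_mul_self, aux_conj_mul_self, hGcoe i, hHcoe i]
    simp only [hp, hS, hR]; push_cast; ring
  have hdiag_re : ∀ i, (star (ψ i) ⬝ᵥ (a ⊗ₖ b).mulVec (ψ i)).re = p i := by
    intro i; rw [hdiag i, Complex.ofReal_re]
  have hp1 : ∀ i, 1 ≤ p i := by
    intro i
    have h1 := hgh i
    simp only [hp]
    nlinarith [hS0 i, hR0 i, hg0 i, hh0 i, ht0.le,
      mul_nonneg (mul_nonneg ht0.le (hg0 i)) (hR0 i),
      mul_nonneg (mul_nonneg ht0.le (hh0 i)) (hS0 i),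
      mul_nonneg (mul_nonneg (mul_nonneg ht0.le ht0.le) (hS0 i)) (hR0 i)]
  have hppos : ∀ i, 0 < p i := fun i => lt_of_lt_of_le one_pos (hp1 i)
  have hc0 : 0 ≤ c := by simp only [hc]; exact add_nonneg (hg0 i0) (hh0 i0)
  have hp_i0 : p i0 = 1 + t * c + t ^ 2 := by
    simp only [hp, hc]
    rw [hS_i0, hR_i0]
    linear_combination (1 + t * (g i0 + h i0) + t ^ 2 * (g i0 * h i0 + 1)) * hgh i0
  have hpk : ∀ k, k ≠ i0 → p k ≤ 1 + t * c := by
    intro k hk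
    have h1 : S k * R k = 0 := hSR k hk
    have h2 : g k * R k ≤ h i0 := by
      have h3 := mul_le_mul_of_nonneg_left (hCS_R k) (hg0 k)
      nlinarith [hgh k, hhpos i0]
    have h3 : h k * S k ≤ g i0 := by
      have h4 := mul_le_mul_of_nonneg_left (hCS_S k) (hh0 k)
      nlinarith [hgh k, hgpos i0]
    simp only [hp, hc]
    nlinarith [hgh k, ht0.le, mul_le_mul_of_nonneg_left h2 ht0.le,
      mul_le_mul_of_nonneg_left h3 ht0.le,
      mul_nonneg (mul_nonneg ht0.le ht0.le) (mul_nonneg (hS0 k) (hR0 k))]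
  have hne : ∀ i, star (ψ i) ⬝ᵥ (a ⊗ₖ b).mulVec (ψ i) ≠ 0 := by
    intro i
    rw [hdiag i]
    exact_mod_cast ne_of_gt (hppos i)
  have hapsd : a.PosSemidef := by rw [ha]; exact aux_psd t ht0.le (α i0)
  have hbpsd : b.PosSemidef := by rw [hb]; exact aux_psd t ht0.le (β i0)
  haveI hnon : Nonempty {q : Fin n × Fin n // q.1 ≠ q.2} := by
    refine ⟨⟨(⟨0, by omega⟩, ⟨1, by omega⟩), ?_⟩⟩
    simp [Fin.ext_iff]
  -- the disturbance is at most 1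
  have hdist : disturbance ψ a b ≤ 1 := by
    rw [disturbance]
    refine ciSup_le ?_
    rintro ⟨⟨i, j⟩, hij⟩
    simp only
    have hij' : i ≠ j := hij
    have hden1 : (1 : ℝ) ≤ Real.sqrt (p i * p j) := by
      rw [show (1 : ℝ) = Real.sqrt 1 from Real.sqrt_one.symm]
      exact Real.sqrt_le_sqrt (by nlinarith [hp1 i, hp1 j])
    rw [hdiag_re i, hdiag_re j, div_le_one (lt_of_lt_of_le one_pos hden1)]
    -- the numerator identity
    have hsr0 : (starRingEnd ℂ) (G i0 i) * G i0 j * ((starRingEnd ℂ) (H i0 i) * H i0 j)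
        = 0 := by
      rcases eq_or_ne i i0 with hi | hi
      · have h1 : G i0 j * H i0 j = 0 := hGH i0 j (by rw [← hi]; exact hij')
        linear_combination ((starRingEnd ℂ) (G i0 i) * (starRingEnd ℂ) (H i0 i)) * h1
      · have h1 : G i0 i * H i0 i = 0 := hGH i0 i (Ne.symm hi)
        have h2 : (starRingEnd ℂ) (G i0 i) * (starRingEnd ℂ) (H i0 i) = 0 := by
          rw [← _root_.map_mul, h1]; simp
        linear_combination (G i0 j * H i0 j) * h2
    have hnum : star (ψ i) ⬝ᵥ (a ⊗ₖ b).mulVec (ψ j)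
        = (t : ℂ) * (G i j * ((starRingEnd ℂ) (H i0 i) * H i0 j)
            + H i j * ((starRingEnd ℂ) (G i0 i) * G i0 j)) := by
      rw [hA i j]
      linear_combination hGH i j hij' + (t : ℂ) ^ 2 * hsr0
    rw [hnum]
    have hnormG0 : ∀ l, ‖G i0 l‖ = Real.sqrt (S l) := by
      intro l; simp only [hS]; rw [Real.sqrt_sq (norm_nonneg _)]
    have hnormH0 : ∀ l, ‖H i0 l‖ = Real.sqrt (R l) := by
      intro l; simp only [hR]; rw [Real.sqrt_sq (norm_nonneg _)]
    have hnormGij : ‖G i j‖ ≤ Real.sqrt (g i * g j) :=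
      (Real.le_sqrt (norm_nonneg _) (mul_nonneg (hg0 i) (hg0 j))).mpr (hCS_G i j)
    have hnormHij : ‖H i j‖ ≤ Real.sqrt (h i * h j) :=
      (Real.le_sqrt (norm_nonneg _) (mul_nonneg (hh0 i) (hh0 j))).mpr (hCS_H i j)
    have hW : ∀ l, 0 ≤ g l * R l + h l * S l := fun l =>
      add_nonneg (mul_nonneg (hg0 l) (hR0 l)) (mul_nonneg (hh0 l) (hS0 l))
    have hWp : ∀ l, t * (g l * R l + h l * S l) ≤ p l := by
      intro l
      simp only [hp]
      nlinarith [hgh l, mul_nonneg (mul_nonneg (mul_nonneg ht0.le ht0.le) (hS0 l)) (hR0 l)]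
    calc ‖(t : ℂ) * (G i j * ((starRingEnd ℂ) (H i0 i) * H i0 j)
            + H i j * ((starRingEnd ℂ) (G i0 i) * G i0 j))‖
        ≤ t * (‖G i j‖ * (‖H i0 i‖ * ‖H i0 j‖) + ‖H i j‖ * (‖G i0 i‖ * ‖G i0 j‖)) := by
          rw [norm_mul, Complex.norm_real, Real.norm_eq_abs, abs_of_pos ht0]
          refine mul_le_mul_of_nonneg_left (le_trans (norm_add_le _ _) (le_of_eq ?_)) ht0.le
          simp only [norm_mul, RCLike.norm_conj]
      _ ≤ t * (Real.sqrt (g i * g j) * (Real.sqrt (R i) * Real.sqrt (R j))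
            + Real.sqrt (h i * h j) * (Real.sqrt (S i) * Real.sqrt (S j))) := by
          rw [hnormG0 i, hnormG0 j, hnormH0 i, hnormH0 j]
          refine mul_le_mul_of_nonneg_left (add_le_add ?_ ?_) ht0.le
          · exact mul_le_mul_of_nonneg_right hnormGij
              (mul_nonneg (Real.sqrt_nonneg _) (Real.sqrt_nonneg _))
          · exact mul_le_mul_of_nonneg_right hnormHij
              (mul_nonneg (Real.sqrt_nonneg _) (Real.sqrt_nonneg _))
      _ = t * (Real.sqrt ((g i * R i) * (g j * R j))
            + Real.sqrt ((h i * S i) * (h j * S j))) := by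
          rw [aux_sqrt_comb (hg0 i) (hg0 j) (hR0 i) (hR0 j),
            aux_sqrt_comb (hh0 i) (hh0 j) (hS0 i) (hS0 j)]
      _ ≤ t * Real.sqrt ((g i * R i + h i * S i) * (g j * R j + h j * S j)) := by
          refine mul_le_mul_of_nonneg_left ?_ ht0.le
          exact aux_two_cs (mul_nonneg (hg0 i) (hR0 i)) (mul_nonneg (hh0 i) (hS0 i))
            (mul_nonneg (hg0 j) (hR0 j)) (mul_nonneg (hh0 j) (hS0 j))
      _ = Real.sqrt (t ^ 2 * ((g i * R i + h i * S i) * (g j * R j + h j * S j))) := by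
          rw [Real.sqrt_mul (sq_nonneg t), Real.sqrt_sq ht0.le]
      _ ≤ Real.sqrt (p i * p j) := by
          refine Real.sqrt_le_sqrt ?_
          nlinarith [mul_le_mul (hWp i) (hWp j)
            (mul_nonneg ht0.le (hW j)) (hppos i).le]
  -- apply the nonlocality inequality
  have hmain := hη a b hapsd hbpsd hne
  have hsum_rw : ∑ j, (star (ψ j) ⬝ᵥ (a ⊗ₖ b).mulVec (ψ j)).re = ∑ j, p j :=
    Finset.sum_congr rfl fun j _ => hdiag_re j
  have hsup_rw : (⨆ k, (star (ψ k) ⬝ᵥ (a ⊗ₖ b).mulVec (ψ k)).re) = ⨆ k, p k :=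
    iSup_congr hdiag_re
  rw [hsum_rw, hsup_rw] at hmain
  haveI : Nonempty (Fin n) := ⟨i0⟩
  have hsup_ge : p i0 ≤ ⨆ k, p k := le_ciSup (Set.finite_range p).bddAbove i0
  have hsum_pos : 0 < ∑ j, p j :=
    Finset.sum_pos (fun j _ => hppos j) ⟨i0, Finset.mem_univ i0⟩
  have hsum_le : ∑ j, p j ≤ p i0 + ((n : ℝ) - 1) * (1 + t * c) := by
    rw [← Finset.add_sum_erase Finset.univ p (Finset.mem_univ i0)]
    refine add_le_add le_rfl ?_
    calc ∑ k ∈ Finset.univ.erase i0, p k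
        ≤ (Finset.univ.erase i0).card • (1 + t * c) :=
          Finset.sum_le_card_nsmul _ _ _ (fun k hk => hpk k (Finset.ne_of_mem_erase hk))
      _ = ((n : ℝ) - 1) * (1 + t * c) := by
          rw [Finset.card_erase_of_mem (Finset.mem_univ i0), Finset.card_univ,
            Fintype.card_fin, nsmul_eq_mul]
          congr 1
          have h1 : (1 : ℕ) ≤ n := by omega
          push_cast [Nat.cast_sub h1]
          ring
  set X : ℝ := ((n : ℝ) - 1) * (1 + c) / t with hX
  have hX0 : 0 ≤ X := by
    rw [hX]
    refine div_nonneg (mul_nonneg (by linarith) (by linarith)) ht0.le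
  have hE0 : 0 ≤ ((n : ℝ) - 1) * (1 + t * c) := by
    refine mul_nonneg (by linarith) (by nlinarith [mul_nonneg ht0.le hc0])
  have hE : ((n : ℝ) - 1) * (1 + t * c) ≤ X * p i0 := by
    have hXt : X * t = ((n : ℝ) - 1) * (1 + c) := by
      rw [hX]; field_simp
    have h2 : 1 + t * c ≤ t * (1 + c) := by nlinarith [mul_nonneg (sub_nonneg.mpr ht) hc0]
    have h3 : t ^ 2 ≤ p i0 := by rw [hp_i0]; nlinarith [mul_nonneg ht0.le hc0]
    calc ((n : ℝ) - 1) * (1 + t * c) ≤ ((n : ℝ) - 1) * (t * (1 + c)) :=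
          mul_le_mul_of_nonneg_left h2 (by linarith)
      _ = (X * t) * t := by rw [hXt]; ring
      _ = X * t ^ 2 := by ring
      _ ≤ X * p i0 := mul_le_mul_of_nonneg_left h3 hX0
  have hfrac : 1 - X ≤ (⨆ k, p k) / (∑ j, p j) := by
    have h1 : p i0 / (∑ j, p j) ≤ (⨆ k, p k) / (∑ j, p j) :=
      (div_le_div_iff_of_pos_right hsum_pos).mpr hsup_ge
    refine le_trans ?_ h1
    rw [le_div_iff₀ hsum_pos]
    rcases le_or_gt (1 - X) 0 with hXc | hXc
    · nlinarith [mul_nonneg (neg_nonneg.mpr hXc) hsum_pos.le, hppos i0]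
    · calc (1 - X) * (∑ j, p j) ≤ (1 - X) * (p i0 + ((n : ℝ) - 1) * (1 + t * c)) :=
            mul_le_mul_of_nonneg_left hsum_le hXc.le
        _ ≤ p i0 := by nlinarith [hE, mul_nonneg hX0 hE0]
  have hstep : η * (1 - X - 1 / (n : ℝ)) ≤ 1 := by
    have h1 : (1 - X) - 1 / (n : ℝ) ≤ (⨆ k, p k) / (∑ j, p j) - 1 / (n : ℝ) := by
      linarith
    have h2 := mul_le_mul_of_nonneg_left h1 hη0
    calc η * (1 - X - 1 / (n : ℝ)) ≤ η * ((⨆ k, p k) / (∑ j, p j) - 1 / (n : ℝ)) := h2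
      _ ≤ disturbance ψ a b := hmain
      _ ≤ 1 := hdist
  nlinarith [hstep]

/-- If `S = {ψ i}` (with `n ≥ 2`) is an orthonormal set of product states in
`ℂ^{d_A} ⊗ ℂ^{d_B}` and the real number `η` satisfies the nonlocality inequality for `S`,
then `η ≤ 2`; i.e. the nonlocality constant of `S` is at most `2`. -/
theorem stmt17 {n dA dB : ℕ} (hn : 2 ≤ n)
    (ψ : Fin n → Fin dA × Fin dB → ℂ)
    (α : Fin n → Fin dA → ℂ) (β : Fin n → Fin dB → ℂ)
    (hprod : ∀ i, ψ i = fun p => α i p.1 * β i p.2)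
    (hunit : ∀ i, star (ψ i) ⬝ᵥ ψ i = 1)
    (horth : ∀ i j, i ≠ j → star (ψ i) ⬝ᵥ ψ j = 0)
    (η : ℝ)
    (hη : ∀ (a : Matrix (Fin dA) (Fin dA) ℂ) (b : Matrix (Fin dB) (Fin dB) ℂ),
      a.PosSemidef → b.PosSemidef →
      (∀ i, star (ψ i) ⬝ᵥ (a ⊗ₖ b).mulVec (ψ i) ≠ 0) →
      η * ((⨆ k, (star (ψ k) ⬝ᵥ (a ⊗ₖ b).mulVec (ψ k)).re) /
            (∑ j, (star (ψ j) ⬝ᵥ (a ⊗ₖ b).mulVec (ψ j)).re) -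
          1 / (n : ℝ)) ≤
        disturbance ψ a b) :
    η ≤ 2 := by
  rcases le_or_gt η 0 with hneg | hpos
  · linarith
  have hn0 : 0 < n := by omega
  set i0 : Fin n := ⟨0, hn0⟩ with hi0
  set c : ℝ := (star (α i0) ⬝ᵥ α i0).re + (star (β i0) ⬝ᵥ β i0).re with hcdef
  have hc0 : 0 ≤ c := by
    rw [hcdef]; exact add_nonneg (aux_dot_self_nonneg _) (aux_dot_self_nonneg _)
  have hn' : (2 : ℝ) ≤ (n : ℝ) := by exact_mod_cast hn
  have key : ∀ t : ℝ, 1 ≤ t →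
      η * (1 - 1 / (n : ℝ)) ≤ 1 + η * (((n : ℝ) - 1) * (1 + c) / t) := by
    intro t ht
    have := aux_key hn ψ α β hprod hunit horth η hpos.le hη t ht i0
    rw [← hcdef] at this
    exact this
  have h12 : η * (1 - 1 / (n : ℝ)) ≤ 1 := by
    by_contra h'
    push_neg at h'
    set ε : ℝ := η * (1 - 1 / (n : ℝ)) - 1 with hε
    have hε0 : 0 < ε := by rw [hε]; linarith
    set T : ℝ := max 1 (2 * η * (((n : ℝ) - 1) * (1 + c)) / ε) with hT
    have hT1 : 1 ≤ T := le_max_left _ _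
    have hT0 : 0 < T := lt_of_lt_of_le one_pos hT1
    have hA0 : 0 ≤ ((n : ℝ) - 1) * (1 + c) :=
      mul_nonneg (by linarith) (by linarith)
    have h2 : η * (((n : ℝ) - 1) * (1 + c) / T) ≤ ε / 2 := by
      rw [← mul_div_assoc, div_le_iff₀ hT0]
      have h3 : 2 * η * (((n : ℝ) - 1) * (1 + c)) / ε ≤ T := le_max_right _ _
      have h4 : (ε / 2) * (2 * η * (((n : ℝ) - 1) * (1 + c)) / ε)
          = η * (((n : ℝ) - 1) * (1 + c)) := by
        field_simp
      have h5 := mul_le_mul_of_nonneg_left h3 (by positivity : (0 : ℝ) ≤ ε / 2)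
      calc η * (((n : ℝ) - 1) * (1 + c)) = (ε / 2) * (2 * η * (((n : ℝ) - 1) * (1 + c)) / ε) :=
            h4.symm
        _ ≤ ε / 2 * T := h5
    have h6 := key T hT1
    have h7 : η * (1 - 1 / (n : ℝ)) = 1 + ε := by rw [hε]; ring
    linarith
  have h8 : 1 / (n : ℝ) ≤ 1 / 2 := by
    apply one_div_le_one_div_of_le <;> linarith
  nlinarith [h12, hpos, mul_nonneg hpos.le (by linarith : (0 : ℝ) ≤ 1 / 2 - 1 / (n : ℝ))]
end
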